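/- arXiv:1003.4437 — 6 statements merged into one kernel-verified Lean document; each statement's English description precedes it below -/
import Mathlib

section
/- Given non-negative real numbers x_1,...,x_n, there exist complex numbers z_1,...,z_n with |z_k| = x_k for all k and sum_k z_k = 0 if and only if the polygon inequalities x_k ≤ sum_{j≠k} x_j hold for all k. -/
/-!
Necessity is the triangle inequality applied to `z k = -∑_{j ≠ k} z j`.

For sufficiency, let `x k₀` be the largest length. Adding the other lengths greedily to whichever
of two piles is lighter splits them into piles of total lengths `b` and `c` with `|b - c| ≤ x k₀`,
so `x k₀, b, c` satisfy the triangle inequalities and are the sides of a triangle in `ℂ`. Each pile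
is then realized by cutting its side into collinear pieces of the prescribed lengths.
-/

open Finset

def PolygonRealizable {ι : Type*} [Fintype ι] (x : ι → ℝ) : Prop :=
  ∃ z : ι → ℂ, (∀ k, ‖z k‖ = x k) ∧ ∑ k, z k = 0

section Polygon

variable {ι : Type*} [Fintype ι]

theorem norm_le_sum_erase_norm_of_sum_eq_zero [DecidableEq ι] {E : Type*}
    [SeminormedAddCommGroup E] {z : ι → E} (hz : ∑ k, z k = 0) (k : ι) :
    ‖z k‖ ≤ ∑ j ∈ univ.erase k, ‖z j‖ := by
  have hk : z k = -∑ j ∈ univ.erase k, z j :=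
    eq_neg_of_add_eq_zero_left (by rw [add_sum_erase univ z (mem_univ k), hz])
  rw [hk, norm_neg]
  exact norm_sum_le _ _

theorem PolygonRealizable.two_mul_le_sum {x : ι → ℝ} (hx : PolygonRealizable x) (k : ι) :
    2 * x k ≤ ∑ j, x j := by
  classical
  obtain ⟨z, hzx, hz⟩ := hx
  have hk := norm_le_sum_erase_norm_of_sum_eq_zero hz k
  simp only [hzx] at hk
  rw [← add_sum_erase univ x (mem_univ k)]
  linarith

end Polygon

theorem exists_subset_abs_two_mul_sum_sub_sum_le {ι : Type*} [DecidableEq ι] {x : ι → ℝ}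
    {M : ℝ} (hM : 0 ≤ M) (s : Finset ι) (hxs : ∀ i ∈ s, 0 ≤ x i ∧ x i ≤ M) :
    ∃ T ⊆ s, |2 * ∑ i ∈ T, x i - ∑ i ∈ s, x i| ≤ M := by
  induction s using Finset.induction_on with
  | empty => exact ⟨∅, Subset.refl _, by simpa using hM⟩
  | @insert a s ha ih =>
    obtain ⟨T, hTs, hT⟩ := ih fun i hi => hxs i (mem_insert_of_mem hi)
    obtain ⟨hxa₀, hxaM⟩ := hxs a (mem_insert_self a s)
    rw [abs_le] at hT
    rcases le_or_gt (2 * ∑ i ∈ T, x i) (∑ i ∈ s, x i) with hlight | hheavy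
    · refine ⟨insert a T, insert_subset_insert a hTs, ?_⟩
      rw [sum_insert fun h => ha (hTs h), sum_insert ha, abs_le]
      constructor <;> linarith
    · refine ⟨T, hTs.trans (subset_insert a s), ?_⟩
      rw [sum_insert ha, abs_le]
      constructor <;> linarith

section Subdivide

variable {E : Type*} [NormedAddCommGroup E] [NormedSpace ℝ E]

theorem norm_div_norm_smul_self {t : ℝ} {v : E} (ht : 0 ≤ t) (htv : t ≤ ‖v‖) :
    ‖(t / ‖v‖) • v‖ = t := by
  rcases (ht.trans htv).eq_or_lt with hv | hv
  · have ht0 : t = 0 := le_antisymm (hv ▸ htv) ht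
    simp [ht0]
  · rw [norm_smul, Real.norm_eq_abs, abs_of_nonneg (div_nonneg ht hv.le),
      div_mul_cancel₀ _ hv.ne']

theorem sum_div_norm_smul_self {ι : Type*} {s : Finset ι} {x : ι → ℝ} {v : E}
    (hv : ‖v‖ = ∑ i ∈ s, x i) : ∑ i ∈ s, (x i / ‖v‖) • v = v := by
  rw [← sum_smul, ← sum_div, ← hv]
  rcases eq_or_ne ‖v‖ 0 with h0 | h0
  · simp [norm_eq_zero.1 h0]
  · rw [div_self h0, one_smul]

end Subdivide

theorem PolygonRealizable.of_fiberwise {ι κ : Type*} [Fintype ι] [Fintype κ] [DecidableEq κ]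
    {x : ι → ℝ} (hx : ∀ i, 0 ≤ x i) (f : ι → κ)
    (h : PolygonRealizable fun j => ∑ i with f i = j, x i) : PolygonRealizable x := by
  obtain ⟨w, hw, hw0⟩ := h
  refine ⟨fun i => (x i / ‖w (f i)‖) • w (f i), fun i => ?_, ?_⟩
  · refine norm_div_norm_smul_self (hx i) ?_
    rw [hw]
    exact single_le_sum (fun j _ => hx j) (by simp)
  · rw [← sum_fiberwise univ f, ← hw0]
    refine sum_congr rfl fun j _ => ?_
    rw [← sum_div_norm_smul_self (hw j)]
    exact sum_congr rfl fun i hi => by rw [(mem_filter.1 hi).2]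

theorem exists_complex_triangle {a b c : ℝ} (ha : 0 ≤ a) (hb : 0 ≤ b) (hc : 0 ≤ c)
    (hab : a ≤ b + c) (hbc : b ≤ a + c) (hca : c ≤ a + b) :
    ∃ u v w : ℂ, ‖u‖ = a ∧ ‖v‖ = b ∧ ‖w‖ = c ∧ u + v + w = 0 := by
  rcases ha.eq_or_lt with rfl | ha
  · obtain rfl : b = c := by linarith
    exact ⟨0, b, -b, by simp, by simp [hb], by simp [hb], by ring⟩
  -- `u = a` on the real axis; the third vertex `-v` projects onto it at `d` and has height `h`.
  set d := (a ^ 2 + b ^ 2 - c ^ 2) / (2 * a)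
  have had : 2 * a * d = a ^ 2 + b ^ 2 - c ^ 2 := mul_div_cancel₀ _ (by positivity)
  have hdb : d ^ 2 ≤ b ^ 2 := by
    have hcos : (a ^ 2 + b ^ 2 - c ^ 2) ^ 2 ≤ (2 * a * b) ^ 2 := by
      nlinarith [mul_nonneg (mul_nonneg (by linarith : 0 ≤ b + c - a) (by linarith : 0 ≤ a + c - b))
        (mul_nonneg (by linarith : 0 ≤ a + b - c) (by linarith : 0 ≤ a + b + c))]
    rw [← had, mul_pow (2 * a), mul_pow (2 * a)] at hcos
    exact le_of_mul_le_mul_left hcos (by positivity)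
  set h := Real.sqrt (b ^ 2 - d ^ 2)
  have hh : h ^ 2 = b ^ 2 - d ^ 2 := Real.sq_sqrt (by linarith)
  refine ⟨a, ⟨-d, -h⟩, ⟨d - a, h⟩, by simp [ha.le], ?_, ?_, ?_⟩
  · rw [Complex.norm_def, Complex.normSq_mk, ← Real.sqrt_sq hb]
    congr 1; linear_combination hh
  · rw [Complex.norm_def, Complex.normSq_mk, ← Real.sqrt_sq hc]
    congr 1; linear_combination hh - had
  · exact Complex.ext (by simp; ring) (by simp)

theorem polygonRealizable_fin_three {y : Fin 3 → ℝ} (hy : ∀ j, 0 ≤ y j)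
    (h₀ : 2 * y 0 ≤ ∑ i, y i) (h₁ : 2 * y 1 ≤ ∑ i, y i) (h₂ : 2 * y 2 ≤ ∑ i, y i) :
    PolygonRealizable y := by
  rw [Fin.sum_univ_three] at h₀ h₁ h₂
  obtain ⟨u, v, w, hu, hv, hw, huvw⟩ :=
    exists_complex_triangle (hy 0) (hy 1) (hy 2) (by linarith) (by linarith) (by linarith)
  refine ⟨![u, v, w], fun j => ?_, by simpa [Fin.sum_univ_three] using huvw⟩
  fin_cases j <;> assumption

theorem polygonRealizable_of_two_mul_le_sum {ι : Type*} [Fintype ι] {x : ι → ℝ}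
    (hx : ∀ i, 0 ≤ x i) (h : ∀ k, 2 * x k ≤ ∑ j, x j) : PolygonRealizable x := by
  classical
  rcases isEmpty_or_nonempty ι with _ | _
  · exact ⟨0, isEmptyElim, by simp⟩
  obtain ⟨k₀, -, hmax⟩ := exists_max_image univ x univ_nonempty
  obtain ⟨T, hT, hbal⟩ := exists_subset_abs_two_mul_sum_sub_sum_le (hx k₀) (univ.erase k₀)
    fun i _ => ⟨hx i, hmax i (mem_univ i)⟩
  have hk₀T : k₀ ∉ T := fun hk => by simpa using hT hk
  let f : ι → Fin 3 := fun i => if i = k₀ then 0 else if i ∈ T then 1 else 2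
  have hf₀ : univ.filter (f · = 0) = {k₀} := by
    ext i; simp only [f, mem_filter, mem_univ, true_and, mem_singleton]; split_ifs <;> simp_all
  have hf₁ : univ.filter (f · = 1) = T := by
    ext i; simp only [f, mem_filter, mem_univ, true_and]; split_ifs <;> simp_all
  have htotal := sum_fiberwise univ f x
  rw [Fin.sum_univ_three, hf₀, hf₁, sum_singleton] at htotal
  have hsplit := add_sum_erase univ x (mem_univ k₀)
  have hk₀ := h k₀
  rw [abs_le] at hbal
  refine PolygonRealizable.of_fiberwise hx f <| polygonRealizable_fin_three
    (fun j => sum_nonneg fun i _ => hx i) ?_ ?_ ?_ <;>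
  simp only [Fin.sum_univ_three, hf₀, hf₁, sum_singleton] <;> linarith

theorem stmt_0 (n : ℕ) (x : Fin n → ℝ) (hx : ∀ k, 0 ≤ x k) :
    (∃ z : Fin n → ℂ, (∀ k, ‖z k‖ = x k) ∧ ∑ k, z k = 0) ↔
      ∀ k, x k ≤ ∑ j ∈ Finset.univ.erase k, x j := by
  have two_mul_le_iff (k : Fin n) : 2 * x k ≤ ∑ j, x j ↔ x k ≤ ∑ j ∈ univ.erase k, x j := by
    rw [← add_sum_erase univ x (mem_univ k)]
    constructor <;> intro <;> linarith
  simp only [← two_mul_le_iff]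
  exact ⟨PolygonRealizable.two_mul_le_sum, polygonRealizable_of_two_mul_le_sum hx⟩
end

section
/- For n ≥ 2 and any z ∈ ℂ^n, there exist unit vectors ψ, φ ∈ ℂ^n (with respect to the ℓ² norm) such that conj(ψ_k)·φ_k = z_k for all k, if and only if sum_k |z_k| ≤ 1. -/
/-! Necessity is Cauchy–Schwarz: `∑ ‖z k‖ = ∑ ‖ψ k‖ ‖φ k‖ ≤ ‖ψ‖ ‖φ‖`. For sufficiency take
`ψ k = √‖z k‖` and `φ k` equal to `√‖z k‖` times the phase of `z k`, except on two coordinates,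
which absorb the slack `1 - ∑ ‖z k‖`. There one needs two vectors of `ℝ²` of the same length with
prescribed coordinatewise products; writing them as `√T (cos α, sin α)` and `√T (cos β, sin β)`,
the product-to-sum formulas determine `α ± β`. -/

open Finset Real

theorem sum_norm_mul_norm_le {𝕜 ι : Type*} [RCLike 𝕜] [Fintype ι]
    (ψ φ : EuclideanSpace 𝕜 ι) : ∑ k, ‖ψ k‖ * ‖φ k‖ ≤ ‖ψ‖ * ‖φ‖ := by
  simpa only [EuclideanSpace.norm_eq] using
    Real.sum_mul_le_sqrt_mul_sqrt univ (fun k => ‖ψ k‖) (fun k => ‖φ k‖)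

theorem exists_cos_mul_cos_eq_and_sin_mul_sin_eq {x y : ℝ} (hp : |x + y| ≤ 1)
    (hm : |x - y| ≤ 1) : ∃ α β : ℝ, cos α * cos β = x ∧ sin α * sin β = y := by
  obtain ⟨hp₁, hp₂⟩ := abs_le.mp hp
  obtain ⟨hm₁, hm₂⟩ := abs_le.mp hm
  -- `α - β = arccos (x + y)` and `α + β = arccos (x - y)`
  set p := arccos (x + y)
  set m := arccos (x - y)
  have hcos_sub : cos ((m + p) / 2 - (m - p) / 2) = x + y := by
    rw [show (m + p) / 2 - (m - p) / 2 = p by ring, cos_arccos hp₁ hp₂]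
  have hcos_add : cos ((m + p) / 2 + (m - p) / 2) = x - y := by
    rw [show (m + p) / 2 + (m - p) / 2 = m by ring, cos_arccos hm₁ hm₂]
  rw [cos_sub] at hcos_sub
  rw [cos_add] at hcos_add
  exact ⟨(m + p) / 2, (m - p) / 2, by linarith, by linarith⟩

theorem sum_sq_ite_eq {ι : Type*} [Fintype ι] [DecidableEq ι] {i j : ι} (hij : i ≠ j)
    (w : ι → ℝ) (hw : ∀ k, 0 ≤ w k) {u v : ℝ} :
    ∑ k, (if k = i then u else if k = j then v else √(w k)) ^ 2
      = u ^ 2 + v ^ 2 - w i - w j + ∑ k, w k := by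
  have hdiff : ∑ k, ((if k = i then u else if k = j then v else √(w k)) ^ 2 - w k)
      = (u ^ 2 - w i) + (v ^ 2 - w j) := by
    rw [Fintype.sum_eq_add i j hij]
    · simp [hij.symm]
    · rintro k ⟨hki, hkj⟩
      simp [hki, hkj, sq_sqrt (hw k)]
  rw [sum_sub_distrib] at hdiff
  linarith

theorem exists_sum_sq_eq_one_mul_eq {ι : Type*} [Fintype ι] [DecidableEq ι] {i j : ι}
    (hij : i ≠ j) (w : ι → ℝ) (hw : ∀ k, 0 ≤ w k) (hsum : ∑ k, w k ≤ 1) :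
    ∃ a b : ι → ℝ, ∑ k, a k ^ 2 = 1 ∧ ∑ k, b k ^ 2 = 1 ∧ ∀ k, a k * b k = w k := by
  set T := w i + w j + (1 - ∑ k, w k)
  have hslack : 0 ≤ 1 - ∑ k, w k := by linarith
  have hwi := hw i
  have hwj := hw j
  have hx : 0 ≤ w i / T := by positivity
  have hy : 0 ≤ w j / T := by positivity
  have hxy : w i / T + w j / T ≤ 1 := by
    rw [← add_div]
    exact div_le_one_of_le₀ (by linarith) (by positivity)
  obtain ⟨α, β, hcos, hsin⟩ := exists_cos_mul_cos_eq_and_sin_mul_sin_eq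
    (abs_le.mpr ⟨by linarith, hxy⟩) (abs_le.mpr ⟨by linarith, by linarith⟩)
  have hsq : ∀ γ, (√T * cos γ) ^ 2 + (√T * sin γ) ^ 2 = T := fun γ => by
    rw [mul_pow, mul_pow, ← mul_add, cos_sq_add_sin_sq, mul_one, sq_sqrt (by positivity)]
  have hmul : ∀ c d, √T * c * (√T * d) = T * (c * d) := fun c d => by
    rw [mul_mul_mul_comm, mul_self_sqrt (by positivity)]
  refine ⟨fun k => if k = i then √T * cos α else if k = j then √T * sin α else √(w k),
    fun k => if k = i then √T * cos β else if k = j then √T * sin β else √(w k), ?_, ?_, ?_⟩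
  · rw [sum_sq_ite_eq hij w hw, hsq]
    ring
  · rw [sum_sq_ite_eq hij w hw, hsq]
    ring
  · intro k
    by_cases hki : k = i
    · simp only [hki, ↓reduceIte, hmul, hcos]
      exact mul_div_cancel_of_imp' fun hT0 => by linarith
    by_cases hkj : k = j
    · simp only [hkj, hij.symm, ↓reduceIte, hmul, hsin]
      exact mul_div_cancel_of_imp' fun hT0 => by linarith
    · simp only [if_neg hki, if_neg hkj, mul_self_sqrt (hw k)]

theorem exists_unit_conj_mul_eq {ι : Type*} [Fintype ι] {i j : ι} (hij : i ≠ j) (z : ι → ℂ)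
    (hz : ∑ k, ‖z k‖ ≤ 1) :
    ∃ ψ φ : EuclideanSpace ℂ ι, ‖ψ‖ = 1 ∧ ‖φ‖ = 1 ∧
      ∀ k, (starRingEnd ℂ) (ψ k) * φ k = z k := by
  classical
  obtain ⟨a, b, ha, hb, hab⟩ :=
    exists_sum_sq_eq_one_mul_eq hij (fun k => ‖z k‖) (fun k => norm_nonneg _) hz
  refine ⟨WithLp.toLp 2 fun k => (a k : ℂ),
    WithLp.toLp 2 fun k => b k * Complex.exp (Complex.arg (z k) * Complex.I), ?_, ?_, ?_⟩
  · simp [EuclideanSpace.norm_eq, ha]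
  · simp [EuclideanSpace.norm_eq, hb]
  · intro k
    simp only [Complex.conj_ofReal]
    rw [← mul_assoc, ← Complex.ofReal_mul, hab, Complex.norm_mul_exp_arg_mul_I]

theorem stmt_1 (n : ℕ) (hn : 2 ≤ n) (z : Fin n → ℂ) :
    (∃ ψ φ : EuclideanSpace ℂ (Fin n), ‖ψ‖ = 1 ∧ ‖φ‖ = 1 ∧
      ∀ k, (starRingEnd ℂ) (ψ k) * φ k = z k) ↔
      ∑ k, ‖z k‖ ≤ 1 := by
  constructor
  · rintro ⟨ψ, φ, hψ, hφ, hψφ⟩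
    calc ∑ k, ‖z k‖ = ∑ k, ‖ψ k‖ * ‖φ k‖ := by
          simp only [← hψφ, norm_mul, RCLike.norm_conj]
      _ ≤ ‖ψ‖ * ‖φ‖ := sum_norm_mul_norm_le ψ φ
      _ = 1 := by rw [hψ, hφ, one_mul]
  · exact exists_unit_conj_mul_eq (i := ⟨0, by omega⟩) (j := ⟨1, by omega⟩)
      (Fin.ne_of_val_ne zero_ne_one) z
end

section
/- Let P be a probability distribution on {1,...,n} with D_∞ = 1/max_k P(k) and D_{1/2} = (sum_k √(P(k)))². Then 1/D_∞ + (√(D_{1/2}) − 1/√(D_∞))² ≥ 1. -/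
lemma sqrt_add_le' {a b : ℝ} (ha : 0 ≤ a) (hb : 0 ≤ b) :
    Real.sqrt (a + b) ≤ Real.sqrt a + Real.sqrt b := by
  have h : a + b ≤ (Real.sqrt a + Real.sqrt b) ^ 2 := by
    nlinarith [Real.sq_sqrt ha, Real.sq_sqrt hb, Real.sqrt_nonneg a, Real.sqrt_nonneg b]
  calc Real.sqrt (a + b) ≤ Real.sqrt ((Real.sqrt a + Real.sqrt b) ^ 2) := Real.sqrt_le_sqrt h
    _ = Real.sqrt a + Real.sqrt b := Real.sqrt_sq (by positivity)

lemma sqrt_sum_le' {ι : Type*} (s : Finset ι) (f : ι → ℝ) (hf : ∀ i ∈ s, 0 ≤ f i) :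
    Real.sqrt (∑ i ∈ s, f i) ≤ ∑ i ∈ s, Real.sqrt (f i) := by
  induction s using Finset.cons_induction with
  | empty => simp
  | cons a s ha ih =>
    rw [Finset.sum_cons, Finset.sum_cons]
    calc Real.sqrt (f a + ∑ i ∈ s, f i)
        ≤ Real.sqrt (f a) + Real.sqrt (∑ i ∈ s, f i) :=
          sqrt_add_le' (hf a (Finset.mem_cons_self a s))
            (Finset.sum_nonneg fun i hi => hf i (Finset.mem_cons_of_mem hi))
      _ ≤ Real.sqrt (f a) + ∑ i ∈ s, Real.sqrt (f i) := by
          gcongr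
          exact ih fun i hi => hf i (Finset.mem_cons_of_mem hi)

theorem stmt_4 (n : ℕ) (hn : 1 ≤ n) (P : Fin n → ℝ) (hP : ∀ k, 0 ≤ P k)
    (hsum : ∑ k, P k = 1) (Dinf Dhalf : ℝ)
    (hDinf : Dinf =
      1 / Finset.univ.sup' (Finset.univ_nonempty_iff.mpr (Fin.pos_iff_nonempty.mp hn)) P)
    (hDhalf : Dhalf = (∑ k, Real.sqrt (P k)) ^ 2) :
    1 ≤ 1 / Dinf + (Real.sqrt Dhalf - 1 / Real.sqrt Dinf) ^ 2 := by
  have hne := Finset.univ_nonempty_iff.mpr (Fin.pos_iff_nonempty.mp hn)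
  set M := Finset.univ.sup' hne P with hM
  obtain ⟨j, -, hj⟩ := Finset.exists_mem_eq_sup' hne P
  -- M = P j, M > 0, M ≤ 1
  have hjM : M = P j := hj
  have hMle : ∀ k, P k ≤ M := fun k => Finset.le_sup' P (Finset.mem_univ k)
  have hM1 : M ≤ 1 := by
    rw [hjM, ← hsum]
    exact Finset.single_le_sum (fun k _ => hP k) (Finset.mem_univ j)
  have hMpos : 0 < M := by
    by_contra h
    push_neg at h
    have : ∑ k, P k ≤ 0 := Finset.sum_nonpos fun k _ => (hMle k).trans h
    linarith
  set S := ∑ k, Real.sqrt (P k) with hS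
  have hSnn : 0 ≤ S := Finset.sum_nonneg fun k _ => Real.sqrt_nonneg _
  -- remaining mass
  have hrest : ∑ k ∈ Finset.univ.erase j, P k = 1 - M := by
    have := Finset.add_sum_erase Finset.univ P (Finset.mem_univ j)
    rw [hsum] at this
    rw [hjM]; linarith
  have hkey : Real.sqrt M + Real.sqrt (1 - M) ≤ S := by
    have h1 : Real.sqrt (1 - M) ≤ ∑ k ∈ Finset.univ.erase j, Real.sqrt (P k) := by
      rw [← hrest]
      exact sqrt_sum_le' _ _ fun i _ => hP i
    have h2 : S = Real.sqrt (P j) + ∑ k ∈ Finset.univ.erase j, Real.sqrt (P k) :=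
      (Finset.add_sum_erase Finset.univ _ (Finset.mem_univ j)).symm
    rw [h2, ← hjM]; linarith
  -- simplify goal
  rw [hDinf, hDhalf]
  have e2 : Real.sqrt (1 / M) = 1 / Real.sqrt M := by
    rw [one_div, Real.sqrt_inv, one_div]
  rw [one_div_one_div, Real.sqrt_sq hSnn, e2, one_div_one_div]
  have h1M : (0:ℝ) ≤ 1 - M := by linarith
  have hsq : (1 - M) ≤ (S - Real.sqrt M) ^ 2 := by
    have h0 : Real.sqrt (1 - M) ≤ S - Real.sqrt M := by linarith
    calc 1 - M = Real.sqrt (1 - M) ^ 2 := (Real.sq_sqrt h1M).symm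
      _ ≤ (S - Real.sqrt M) ^ 2 := by gcongr
  linarith
end

section
/- Let H be a finite-dimensional complex Hilbert space, ψ, φ unit vectors, Π_1,...,Π_n orthogonal projections with sum_k Π_k = 1, T = |⟨φ,ψ⟩|², and S = sum_j |⟨φ,Π_j ψ⟩|². Then S ≤ (T+1)/2. -/
/-!
Write `a j = ⟪φ, Π_j ψ⟫`, so that `∑ j, a j = ⟪φ, ψ⟫`. Since `a j = ⟪Π_j φ, Π_j ψ⟫`, Cauchy–Schwarz
twice and Pythagoras `∑ j, ‖Π_j v‖² = ‖v‖²` give `∑ j, |a j| ≤ 1`. The claim then follows from the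
scalar inequality `2 ∑ |a j|² ≤ (∑ |a j|)² + |∑ a j|²`: expanding both squares, each off-diagonal
term `|a j| |a k| + Re (conj (a j) a k)` is nonnegative, and each diagonal term is `2 |a j|²`.
-/

open scoped InnerProductSpace
open Finset

theorem two_mul_sum_norm_sq_le_sq_sum_norm_add_norm_sum_sq {E ι : Type*}
    [NormedAddCommGroup E] [InnerProductSpace ℝ E] (s : Finset ι) (a : ι → E) :
    2 * ∑ i ∈ s, ‖a i‖ ^ 2 ≤ (∑ i ∈ s, ‖a i‖) ^ 2 + ‖∑ i ∈ s, a i‖ ^ 2 := by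
  have hsq : (∑ i ∈ s, ‖a i‖) ^ 2 = ∑ i ∈ s, ∑ j ∈ s, ‖a i‖ * ‖a j‖ := by
    rw [sq, sum_mul_sum]
  have hnorm : ‖∑ i ∈ s, a i‖ ^ 2 = ∑ i ∈ s, ∑ j ∈ s, ⟪a i, a j⟫_ℝ := by
    rw [← real_inner_self_eq_norm_sq, sum_inner]
    simp only [inner_sum]
  rw [hsq, hnorm, ← sum_add_distrib, mul_sum]
  refine sum_le_sum fun i hi => ?_
  rw [← sum_add_distrib]
  have hterm_nonneg : ∀ j ∈ s, 0 ≤ ‖a i‖ * ‖a j‖ + ⟪a i, a j⟫_ℝ := fun j _ => by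
    linarith [neg_le_of_abs_le (abs_real_inner_le_norm (a i) (a j))]
  calc 2 * ‖a i‖ ^ 2 = ‖a i‖ * ‖a i‖ + ⟪a i, a i⟫_ℝ := by
        rw [real_inner_self_eq_norm_mul_norm]; ring
    _ ≤ ∑ j ∈ s, (‖a i‖ * ‖a j‖ + ⟪a i, a j⟫_ℝ) := single_le_sum hterm_nonneg hi

namespace LinearMap

variable {𝕜 E ι : Type*} [RCLike 𝕜] [NormedAddCommGroup E] [InnerProductSpace 𝕜 E]

theorem IsSymmetricProjection.inner_map_eq_inner_map_map {P : E →ₗ[𝕜] E}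
    (hP : P.IsSymmetricProjection) (x y : E) : ⟪x, P y⟫_𝕜 = ⟪P x, P y⟫_𝕜 := by
  rw [hP.isSymmetric x (P y), ← Module.End.mul_apply, hP.isIdempotentElem.eq]

variable [Fintype ι] {P : ι → E →ₗ[𝕜] E}

theorem sum_apply_eq_self_of_sum_eq_id (hsum : ∑ i, P i = LinearMap.id) (v : E) :
    ∑ i, P i v = v := by
  rw [← LinearMap.sum_apply, hsum, LinearMap.id_apply]

theorem sum_norm_map_sq_eq_norm_sq (hP : ∀ i, (P i).IsSymmetricProjection)
    (hsum : ∑ i, P i = LinearMap.id) (v : E) : ∑ i, ‖P i v‖ ^ 2 = ‖v‖ ^ 2 := by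
  have hre : ∀ i, ‖P i v‖ ^ 2 = RCLike.re ⟪v, P i v⟫_𝕜 := fun i => by
    rw [(hP i).inner_map_eq_inner_map_map, inner_self_eq_norm_sq]
  simp only [hre, ← map_sum, ← inner_sum, sum_apply_eq_self_of_sum_eq_id hsum,
    inner_self_eq_norm_sq]

theorem sum_norm_inner_map_le (hP : ∀ i, (P i).IsSymmetricProjection)
    (hsum : ∑ i, P i = LinearMap.id) (x y : E) : ∑ i, ‖⟪x, P i y⟫_𝕜‖ ≤ ‖x‖ * ‖y‖ :=
  calc ∑ i, ‖⟪x, P i y⟫_𝕜‖ ≤ ∑ i, ‖P i x‖ * ‖P i y‖ := sum_le_sum fun i _ => by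
        rw [(hP i).inner_map_eq_inner_map_map]; exact norm_inner_le_norm _ _
    _ ≤ √(∑ i, ‖P i x‖ ^ 2) * √(∑ i, ‖P i y‖ ^ 2) := Real.sum_mul_le_sqrt_mul_sqrt _ _ _
    _ = ‖x‖ * ‖y‖ := by
        rw [sum_norm_map_sq_eq_norm_sq hP hsum, sum_norm_map_sq_eq_norm_sq hP hsum,
          Real.sqrt_sq (norm_nonneg x), Real.sqrt_sq (norm_nonneg y)]

end LinearMap

theorem stmt_12_general {H : Type*} [NormedAddCommGroup H] [InnerProductSpace ℂ H]
    (n : ℕ) (ψ φ : H) (hψ : ‖ψ‖ = 1) (hφ : ‖φ‖ = 1)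
    (Pr : Fin n → H →ₗ[ℂ] H) (hsa : ∀ k, (Pr k).IsSymmetric)
    (hidem : ∀ k, Pr k ∘ₗ Pr k = Pr k) (hsum : ∑ k, Pr k = LinearMap.id)
    (T S : ℝ) (hT : T = ‖⟪φ, ψ⟫_ℂ‖ ^ 2)
    (hS : S = ∑ j, ‖⟪φ, Pr j ψ⟫_ℂ‖ ^ 2) :
    S ≤ (T + 1) / 2 := by
  have hP : ∀ k, (Pr k).IsSymmetricProjection := fun k => ⟨hidem k, hsa k⟩
  have hL1 : ∑ j, ‖⟪φ, Pr j ψ⟫_ℂ‖ ≤ 1 := by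
    simpa [hφ, hψ] using LinearMap.sum_norm_inner_map_le hP hsum φ ψ
  have hL1_nonneg : 0 ≤ ∑ j, ‖⟪φ, Pr j ψ⟫_ℂ‖ := sum_nonneg fun j _ => norm_nonneg _
  have key := two_mul_sum_norm_sq_le_sq_sum_norm_add_norm_sum_sq univ fun j => ⟪φ, Pr j ψ⟫_ℂ
  rw [← inner_sum, LinearMap.sum_apply_eq_self_of_sum_eq_id hsum] at key
  rw [hS, hT]
  nlinarith

theorem stmt_12 {H : Type*} [NormedAddCommGroup H] [InnerProductSpace ℂ H]
    [FiniteDimensional ℂ H] (n : ℕ) (ψ φ : H) (hψ : ‖ψ‖ = 1) (hφ : ‖φ‖ = 1)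
    (Pr : Fin n → H →ₗ[ℂ] H) (hsa : ∀ k, (Pr k).IsSymmetric)
    (hidem : ∀ k, Pr k ∘ₗ Pr k = Pr k) (hsum : ∑ k, Pr k = LinearMap.id)
    (T S : ℝ) (hT : T = ‖⟪φ, ψ⟫_ℂ‖ ^ 2)
    (hS : S = ∑ j, ‖⟪φ, Pr j ψ⟫_ℂ‖ ^ 2) :
    S ≤ (T + 1) / 2 :=
  stmt_12_general n ψ φ hψ hφ Pr hsa hidem hsum T S hT hS
end

section
/- For any T ∈ [0,1], S ∈ (0,1], and n ≥ 2 satisfying T/n ≤ S ≤ (T+1)/2, there exist unit vectors ψ, φ ∈ ℂ^n and mutually orthogonal projections Π_1,...,Π_n with sum_k Π_k = 1 such that |⟨φ,ψ⟩|² = T and sum_j |⟨φ,Π_j ψ⟩|² = S. -/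
/-!
Take ψ, φ real and Π_k the coordinate projections. With p_j = φ_j ψ_j the transition amplitude
is ∑ p_j and the success probability is ∑ p_j². Put ψ = cos a · e₀ + sin a · v and
φ = cos b · e₀ + sin b · v, where v is the uniform unit vector on m further coordinates. With
P = cos a cos b and Q = sin a sin b this gives T = (P + Q)² and S = P² + Q²/m, and since
P ± Q = cos (a ∓ b), any P, Q with |P ± Q| ≤ 1 occur. Along the line P + Q = √T the value of S
sweeps out [T/(m+1), (√T+1)²/4 + (1-√T)²/(4m)] by the intermediate value theorem; m = n - 1
covers S ≤ T/2, and m = 1 covers S ≥ T/2 up to (T + 1)/2.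
-/

open scoped InnerProductSpace
open Finset

section CoordProj

variable {ι : Type*} [DecidableEq ι]

noncomputable def coordProj (k : ι) : EuclideanSpace ℂ ι →ₗ[ℂ] EuclideanSpace ℂ ι where
  toFun x := WithLp.toLp 2 fun j => if j = k then x j else 0
  map_add' x y := by ext j; by_cases h : j = k <;> simp [h]
  map_smul' c x := by ext j; by_cases h : j = k <;> simp [h]

@[simp]
lemma coordProj_apply (k : ι) (x : EuclideanSpace ℂ ι) (j : ι) :
    coordProj k x j = if j = k then x j else 0 := rfl

lemma coordProj_comp_self (k : ι) :
    (coordProj k : EuclideanSpace ℂ ι →ₗ[ℂ] _) ∘ₗ coordProj k = coordProj k := by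
  ext x j
  by_cases h : j = k <;> simp [h]

lemma coordProj_comp_of_ne {j k : ι} (h : j ≠ k) :
    (coordProj j : EuclideanSpace ℂ ι →ₗ[ℂ] _) ∘ₗ coordProj k = 0 := by
  ext x i
  by_cases hj : i = j <;> by_cases hk : i = k <;> simp_all

variable [Fintype ι]

lemma coordProj_isSymmetric (k : ι) : (coordProj k : EuclideanSpace ℂ ι →ₗ[ℂ] _).IsSymmetric := by
  intro x y
  simp [PiLp.inner_apply, apply_ite]

lemma sum_coordProj : ∑ k, (coordProj k : EuclideanSpace ℂ ι →ₗ[ℂ] _) = LinearMap.id := by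
  ext x j
  simp [LinearMap.sum_apply, WithLp.ofLp_sum, Finset.sum_apply]

end CoordProj

section RealVec

variable {ι : Type*} [Fintype ι]

noncomputable def realVec (u : ι → ℝ) : EuclideanSpace ℂ ι := WithLp.toLp 2 fun j => (u j : ℂ)

lemma norm_realVec (u : ι → ℝ) : ‖realVec u‖ = √(∑ j, u j ^ 2) := by
  simp [realVec, EuclideanSpace.norm_eq, Complex.norm_real, sq_abs]

lemma inner_realVec (u w : ι → ℝ) : ⟪realVec u, realVec w⟫_ℂ = ((∑ j, u j * w j : ℝ) : ℂ) := by
  simp [realVec, PiLp.inner_apply, mul_comm]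

lemma inner_realVec_coordProj [DecidableEq ι] (u w : ι → ℝ) (k : ι) :
    ⟪realVec u, coordProj k (realVec w)⟫_ℂ = ((u k * w k : ℝ) : ℂ) := by
  simp [realVec, PiLp.inner_apply, apply_ite, mul_comm]

end RealVec

lemma exists_cos_mul_cos_eq_sin_mul_sin_eq {P Q : ℝ} (hsum : |P + Q| ≤ 1) (hdiff : |P - Q| ≤ 1) :
    ∃ a b : ℝ, Real.cos a * Real.cos b = P ∧ Real.sin a * Real.sin b = Q := by
  obtain ⟨hs₁, hs₂⟩ := abs_le.mp hsum
  obtain ⟨hd₁, hd₂⟩ := abs_le.mp hdiff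
  set α := Real.arccos (P - Q)
  set β := Real.arccos (P + Q)
  have hα : Real.cos α = P - Q := Real.cos_arccos hd₁ hd₂
  have hβ : Real.cos β = P + Q := Real.cos_arccos hs₁ hs₂
  refine ⟨(α + β) / 2, (α - β) / 2, ?_, ?_⟩
  · linarith [Real.cos_add_cos α β]
  · linarith [Real.cos_sub_cos α β]

section Spread

variable {ι : Type*} [DecidableEq ι]

/-- `x e_{i₀} + y v` with `v` the uniform unit vector on `s`; for `i₀ ∉ s` an isometry in `(x, y)`. -/
noncomputable def spread (i₀ : ι) (s : Finset ι) (x y : ℝ) : ι → ℝ :=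
  fun j => if j = i₀ then x else if j ∈ s then y / √(#s) else 0

lemma spread_mul_spread (i₀ : ι) (s : Finset ι) (x y x' y' : ℝ) (j : ι) :
    spread i₀ s x y j * spread i₀ s x' y' j
      = if j = i₀ then x * x' else if j ∈ s then y * y' / #s else 0 := by
  unfold spread
  split_ifs
  · rfl
  · rw [div_mul_div_comm, Real.mul_self_sqrt (Nat.cast_nonneg _)]
  · simp

variable [Fintype ι]

lemma sum_ite_eq_ite_mem {i₀ : ι} {s : Finset ι} (h : i₀ ∉ s) (A B : ℝ) :
    ∑ j, (if j = i₀ then A else if j ∈ s then B else 0) = A + #s * B := by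
  have hsplit : ∀ j, (if j = i₀ then A else if j ∈ s then B else 0)
      = (if j = i₀ then A else 0) + (if j ∈ s then B else 0) := by
    intro j
    by_cases h₀ : j = i₀
    · subst h₀; simp [h]
    · simp [h₀]
  simp [hsplit, sum_add_distrib, sum_ite_mem]

lemma sum_spread_mul_spread {i₀ : ι} {s : Finset ι} (h : i₀ ∉ s) (hs : s.Nonempty)
    (x y x' y' : ℝ) :
    ∑ j, spread i₀ s x y j * spread i₀ s x' y' j = x * x' + y * y' := by
  have : (#s : ℝ) ≠ 0 := by exact_mod_cast hs.card_pos.ne'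
  simp only [spread_mul_spread, sum_ite_eq_ite_mem h]
  field_simp

lemma sum_spread_mul_spread_sq {i₀ : ι} {s : Finset ι} (h : i₀ ∉ s) (x y x' y' : ℝ) :
    ∑ j, (spread i₀ s x y j * spread i₀ s x' y' j) ^ 2 = (x * x') ^ 2 + (y * y') ^ 2 / #s := by
  simp only [spread_mul_spread, apply_ite (· ^ 2), zero_pow two_ne_zero, sum_ite_eq_ite_mem h]
  by_cases hs : (#s : ℝ) = 0
  · simp [hs]
  · field_simp

end Spread

lemma exists_add_eq_sq_add_sq_div_eq {m t S : ℝ} (hm : 1 ≤ m) (ht₀ : 0 ≤ t) (ht₁ : t ≤ 1)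
    (hlow : t ^ 2 / (m + 1) ≤ S) (hhigh : S ≤ (t + 1) ^ 2 / 4 + (1 - t) ^ 2 / (4 * m)) :
    ∃ P Q : ℝ, P + Q = t ∧ |P - Q| ≤ 1 ∧ P ^ 2 + Q ^ 2 / m = S := by
  -- `f` decreases on `[(t - 1) / 2, t m / (m + 1)]`, from its value at `P - Q = 1` to its minimum
  set f : ℝ → ℝ := fun Q => (t - Q) ^ 2 + Q ^ 2 / m
  have hm₀ : m ≠ 0 := by positivity
  have hab : (t - 1) / 2 ≤ t * m / (m + 1) := by
    have : 0 ≤ t * m / (m + 1) := by positivity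
    linarith
  have hfa : f ((t - 1) / 2) = (t + 1) ^ 2 / 4 + (1 - t) ^ 2 / (4 * m) := by
    simp only [f]; field_simp; ring
  have hfb : f (t * m / (m + 1)) = t ^ 2 / (m + 1) := by
    simp only [f]; field_simp; ring
  obtain ⟨Q, ⟨hQ₁, hQ₂⟩, hQ⟩ := intermediate_value_Icc' hab (by fun_prop : Continuous f).continuousOn
    ⟨hfb ▸ hlow, hfa ▸ hhigh⟩
  have hQt : t * m / (m + 1) ≤ t := by
    rw [div_le_iff₀ (by linarith)]; nlinarith
  refine ⟨t - Q, Q, by ring, abs_le.mpr ⟨by linarith, by linarith⟩, hQ⟩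

section UnitVectors

variable {ι : Type*} [Fintype ι] [DecidableEq ι] {i₀ : ι} {s : Finset ι}

lemma exists_unit_vectors_of_abs_le (h : i₀ ∉ s) (hs : s.Nonempty) {P Q : ℝ}
    (hsum : |P + Q| ≤ 1) (hdiff : |P - Q| ≤ 1) :
    ∃ u w : ι → ℝ, ∑ j, u j ^ 2 = 1 ∧ ∑ j, w j ^ 2 = 1 ∧
      ∑ j, w j * u j = P + Q ∧ ∑ j, (w j * u j) ^ 2 = P ^ 2 + Q ^ 2 / #s := by
  obtain ⟨a, b, hP, hQ⟩ := exists_cos_mul_cos_eq_sin_mul_sin_eq hsum hdiff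
  refine ⟨spread i₀ s (Real.cos a) (Real.sin a), spread i₀ s (Real.cos b) (Real.sin b),
    ?_, ?_, ?_, ?_⟩
  · simp only [sq]; rw [sum_spread_mul_spread h hs, ← sq, ← sq, Real.cos_sq_add_sin_sq]
  · simp only [sq]; rw [sum_spread_mul_spread h hs, ← sq, ← sq, Real.cos_sq_add_sin_sq]
  · rw [sum_spread_mul_spread h hs, ← hP, ← hQ]; ring
  · rw [sum_spread_mul_spread_sq h, ← hP, ← hQ]; ring

lemma exists_unit_vectors_of_bounds (h : i₀ ∉ s) (hs : s.Nonempty) {t S : ℝ}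
    (ht₀ : 0 ≤ t) (ht₁ : t ≤ 1) (hlow : t ^ 2 / (#s + 1) ≤ S)
    (hhigh : S ≤ (t + 1) ^ 2 / 4 + (1 - t) ^ 2 / (4 * #s)) :
    ∃ u w : ι → ℝ, ∑ j, u j ^ 2 = 1 ∧ ∑ j, w j ^ 2 = 1 ∧
      ∑ j, w j * u j = t ∧ ∑ j, (w j * u j) ^ 2 = S := by
  have hcard : (1 : ℝ) ≤ #s := by exact_mod_cast hs.card_pos
  obtain ⟨P, Q, hPQ, hdiff, hS⟩ := exists_add_eq_sq_add_sq_div_eq hcard ht₀ ht₁ hlow hhigh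
  rw [← hPQ, ← hS]
  exact exists_unit_vectors_of_abs_le h hs (by rw [hPQ, abs_le]; constructor <;> linarith) hdiff

end UnitVectors

lemma exists_real_unit_vectors {n : ℕ} (hn : 2 ≤ n) {T S : ℝ} (hT₀ : 0 ≤ T) (hT₁ : T ≤ 1)
    (hlow : T / n ≤ S) (hhigh : S ≤ (T + 1) / 2) :
    ∃ u w : Fin n → ℝ, ∑ j, u j ^ 2 = 1 ∧ ∑ j, w j ^ 2 = 1 ∧
      (∑ j, w j * u j) ^ 2 = T ∧ ∑ j, (w j * u j) ^ 2 = S := by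
  set t := √T
  set i₀ : Fin n := ⟨0, by omega⟩
  have ht : t ^ 2 = T := Real.sq_sqrt hT₀
  have ht₀ : 0 ≤ t := Real.sqrt_nonneg T
  have ht₁ : t ≤ 1 := Real.sqrt_le_one.mpr hT₁
  suffices ∃ s : Finset (Fin n), i₀ ∉ s ∧ s.Nonempty ∧ t ^ 2 / (#s + 1) ≤ S ∧
      S ≤ (t + 1) ^ 2 / 4 + (1 - t) ^ 2 / (4 * #s) by
    obtain ⟨s, h, hs, hlow', hhigh'⟩ := this
    obtain ⟨u, w, hu, hw, hT, hS⟩ := exists_unit_vectors_of_bounds h hs ht₀ ht₁ hlow' hhigh'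
    exact ⟨u, w, hu, hw, hT ▸ ht, hS⟩
  rcases le_total S (T / 2) with hST | hST
  · have hcard : (#(univ.erase i₀) : ℝ) + 1 = n := by
      rw [card_erase_of_mem (mem_univ _), card_univ, Fintype.card_fin, Nat.cast_sub (by omega)]
      ring
    refine ⟨univ.erase i₀, notMem_erase _ _, ⟨⟨1, by omega⟩, by simp [Fin.ext_iff]⟩,
      by rwa [hcard, ht], ?_⟩
    have : 0 ≤ (1 - t) ^ 2 / (4 * #(univ.erase i₀)) := by positivity
    nlinarith
  · refine ⟨{⟨1, by omega⟩}, by simp [Fin.ext_iff], singleton_nonempty _, ?_, ?_⟩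
    all_goals rw [card_singleton, Nat.cast_one]; nlinarith

theorem stmt_13_general (n : ℕ) (hn : 2 ≤ n) (T S : ℝ) (hT0 : 0 ≤ T) (hT1 : T ≤ 1)
    (hlow : T / n ≤ S) (hhigh : S ≤ (T + 1) / 2) :
    ∃ (ψ φ : EuclideanSpace ℂ (Fin n))
      (Pr : Fin n → EuclideanSpace ℂ (Fin n) →ₗ[ℂ] EuclideanSpace ℂ (Fin n)),
      ‖ψ‖ = 1 ∧ ‖φ‖ = 1 ∧
      (∀ k, (Pr k).IsSymmetric) ∧ (∀ k, Pr k ∘ₗ Pr k = Pr k) ∧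
      (∀ j k, j ≠ k → Pr j ∘ₗ Pr k = 0) ∧ (∑ k, Pr k = LinearMap.id) ∧
      ‖⟪φ, ψ⟫_ℂ‖ ^ 2 = T ∧
      (∑ j, ‖⟪φ, Pr j ψ⟫_ℂ‖ ^ 2) = S := by
  obtain ⟨u, w, hu, hw, hT, hS⟩ := exists_real_unit_vectors hn hT0 hT1 hlow hhigh
  refine ⟨realVec u, realVec w, coordProj, ?_, ?_, coordProj_isSymmetric,
    fun _ ↦ coordProj_comp_self _, fun _ _ ↦ coordProj_comp_of_ne, sum_coordProj, ?_, ?_⟩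
  · rw [norm_realVec, hu, Real.sqrt_one]
  · rw [norm_realVec, hw, Real.sqrt_one]
  · rw [inner_realVec, Complex.norm_real, Real.norm_eq_abs, sq_abs, hT]
  · simp only [inner_realVec_coordProj, Complex.norm_real, Real.norm_eq_abs, sq_abs, hS]

theorem stmt_13 (n : ℕ) (hn : 2 ≤ n) (T S : ℝ) (hT0 : 0 ≤ T) (hT1 : T ≤ 1)
    (hS0 : 0 < S) (hS1 : S ≤ 1) (hlow : T / n ≤ S) (hhigh : S ≤ (T + 1) / 2) :
    ∃ (ψ φ : EuclideanSpace ℂ (Fin n))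
      (Pr : Fin n → EuclideanSpace ℂ (Fin n) →ₗ[ℂ] EuclideanSpace ℂ (Fin n)),
      ‖ψ‖ = 1 ∧ ‖φ‖ = 1 ∧
      (∀ k, (Pr k).IsSymmetric) ∧ (∀ k, Pr k ∘ₗ Pr k = Pr k) ∧
      (∀ j k, j ≠ k → Pr j ∘ₗ Pr k = 0) ∧ (∑ k, Pr k = LinearMap.id) ∧
      ‖⟪φ, ψ⟫_ℂ‖ ^ 2 = T ∧
      (∑ j, ‖⟪φ, Pr j ψ⟫_ℂ‖ ^ 2) = S :=
  stmt_13_general n hn T S hT0 hT1 hlow hhigh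
end

section
/- Let P be a probability distribution on {1,...,n}, T ∈ [0,1], S ∈ (0,1], and assume S > 0. Then there exist a finite-dimensional complex Hilbert space H, unit vectors ψ, φ ∈ H, and operators V_1,...,V_n on H with sum_k V_k†V_k = 1, such that |⟨φ,ψ⟩|² = T, sum_j |⟨φ, V_j ψ⟩|² = S, and |⟨φ, V_k ψ⟩|² = P(k)·S for all k. (No constraints: any (P,T,S) is realizable by a generalized measurement.) -/
/-!
Take one isometry `U` and the Kraus operators `V k = √(P k) • U`: completeness reduces to
`∑ k, P k = 1`, and `|⟪φ, V k ψ⟫|² = P k * |⟪φ, U ψ⟫|²`. It therefore suffices to find unit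
vectors `φ, ψ` and an isometry `U` with `|⟪φ, ψ⟫|² = T` and `|⟪φ, U ψ⟫|² = S`. In `ℂ²` take
`φ = e₀`, `ψ = (√T, √(1 - T))`, and for `U` the reflection sending `ψ` to `(√S, √(1 - S))`,
which exists because these unit vectors have a real inner product.
-/

open scoped InnerProductSpace

/-- A model of an `n`-outcome generalized (Kraus) measurement with postselection,
realizing outcome distribution `P`, transition probability `T`, success probability `S`. -/
structure GeneralizedModel (n : ℕ) (P : Fin n → ℝ) (T S : ℝ) where
  H : Type
  [normed : NormedAddCommGroup H]
  [inner_ : InnerProductSpace ℂ H]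
  [findim : FiniteDimensional ℂ H]
  ψ : H
  φ : H
  V : Fin n → H →ₗ[ℂ] H
  norm_ψ : ‖ψ‖ = 1
  norm_φ : ‖φ‖ = 1
  complete : ∑ k, LinearMap.adjoint (V k) ∘ₗ V k = LinearMap.id
  hT : ‖⟪φ, ψ⟫_ℂ‖ ^ 2 = T
  hS : ∑ j, ‖⟪φ, V j ψ⟫_ℂ‖ ^ 2 = S
  hP : ∀ k, ‖⟪φ, V k ψ⟫_ℂ‖ ^ 2 = P k * S

namespace Submodule

variable {𝕜 E : Type*} [RCLike 𝕜] [NormedAddCommGroup E] [InnerProductSpace 𝕜 E]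

theorem reflection_sub_of_inner_comm {v w : E} (hnorm : ‖v‖ = ‖w‖)
    (hinner : ⟪v, w⟫_𝕜 = ⟪w, v⟫_𝕜) : reflection (𝕜 ∙ (v - w))ᗮ v = w := by
  set R := reflection (𝕜 ∙ (v - w))ᗮ
  have hsub : R (v - w) = -(v - w) := reflection_orthogonalComplement_singleton_eq_neg (v - w)
  have hadd : R (v + w) = v + w := by
    apply reflection_mem_subspace_eq_self
    rw [mem_orthogonal_singleton_iff_inner_left, inner_add_left, inner_sub_right,
      inner_sub_right, inner_self_eq_norm_sq_to_K, inner_self_eq_norm_sq_to_K, hnorm, hinner]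
    ring
  have htwo : (2 : 𝕜) • R v = (2 : 𝕜) • w := by
    rw [two_smul, two_smul]
    calc R v + R v = R (v + w) + R (v - w) := by rw [map_add, map_sub]; abel
      _ = w + w := by rw [hadd, hsub]; abel
  exact smul_right_injective E two_ne_zero htwo

end Submodule

theorem norm_inner_sqrt_smul_apply_sq {G H : Type*} [AddCommGroup G] [Module ℂ G]
    [NormedAddCommGroup H] [InnerProductSpace ℂ H] {p : ℝ} (hp : 0 ≤ p) (A : G →ₗ[ℂ] H)
    (φ : H) (ψ : G) : ‖⟪φ, ((√p : ℂ) • A) ψ⟫_ℂ‖ ^ 2 = p * ‖⟪φ, A ψ⟫_ℂ‖ ^ 2 := by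
  rw [LinearMap.smul_apply, inner_smul_right, norm_mul, mul_pow, Complex.norm_real,
    Real.norm_of_nonneg (Real.sqrt_nonneg p), Real.sq_sqrt hp]

section

variable {H : Type} [NormedAddCommGroup H] [InnerProductSpace ℂ H] [FiniteDimensional ℂ H]

theorem LinearIsometry.adjoint_comp_sqrt_smul {p : ℝ} (hp : 0 ≤ p) (U : H →ₗᵢ[ℂ] H) :
    LinearMap.adjoint ((√p : ℂ) • U.toLinearMap) ∘ₗ ((√p : ℂ) • U.toLinearMap) =
      (p : ℂ) • LinearMap.id := by
  rw [LinearMap.adjoint.map_smulₛₗ, LinearMap.smul_comp, LinearMap.comp_smul, smul_smul,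
    U.adjoint_comp_self', Complex.conj_ofReal, ← Complex.ofReal_mul, Real.mul_self_sqrt hp]

noncomputable def GeneralizedModel.ofIsometry {n : ℕ} {P : Fin n → ℝ} (hP : ∀ k, 0 ≤ P k)
    (hPsum : ∑ k, P k = 1) (ψ φ : H) (hψ : ‖ψ‖ = 1) (hφ : ‖φ‖ = 1) (U : H →ₗᵢ[ℂ] H) :
    GeneralizedModel n P (‖⟪φ, ψ⟫_ℂ‖ ^ 2) (‖⟪φ, U ψ⟫_ℂ‖ ^ 2) where
  H := H
  ψ := ψ
  φ := φ
  V k := (√(P k) : ℂ) • U.toLinearMap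
  norm_ψ := hψ
  norm_φ := hφ
  complete := by
    simp_rw [U.adjoint_comp_sqrt_smul (hP _), ← Finset.sum_smul, ← Complex.ofReal_sum, hPsum,
      Complex.ofReal_one, one_smul]
  hT := rfl
  hS := by
    simp_rw [norm_inner_sqrt_smul_apply_sq (hP _), ← Finset.sum_mul, hPsum, one_mul]
    rfl
  hP k := norm_inner_sqrt_smul_apply_sq (hP k) _ _ _

end

noncomputable def unitVec (t : ℝ) : EuclideanSpace ℂ (Fin 2) := !₂[(√t : ℂ), (√(1 - t) : ℂ)]

theorem norm_unitVec {t : ℝ} (h0 : 0 ≤ t) (h1 : t ≤ 1) : ‖unitVec t‖ = 1 := by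
  rw [EuclideanSpace.norm_eq]
  simp [unitVec, Fin.sum_univ_two, h0, h1]

theorem norm_inner_single_unitVec_sq {t : ℝ} (h0 : 0 ≤ t) :
    ‖⟪EuclideanSpace.single 0 1, unitVec t⟫_ℂ‖ ^ 2 = t := by
  simp [unitVec, EuclideanSpace.inner_single_left, h0]

theorem inner_unitVec_comm (s t : ℝ) : ⟪unitVec s, unitVec t⟫_ℂ = ⟪unitVec t, unitVec s⟫_ℂ := by
  simp [unitVec, PiLp.inner_apply, Fin.sum_univ_two, mul_comm]

theorem stmt_19 (n : ℕ) (P : Fin n → ℝ) (hP : ∀ k, 0 ≤ P k) (hPsum : ∑ k, P k = 1)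
    (T S : ℝ) (hT0 : 0 ≤ T) (hT1 : T ≤ 1) (hS0 : 0 < S) (hS1 : S ≤ 1) :
    Nonempty (GeneralizedModel n P T S) := by
  have hψ := norm_unitVec hT0 hT1
  have hχ := norm_unitVec hS0.le hS1
  let U := (Submodule.reflection (ℂ ∙ (unitVec T - unitVec S))ᗮ).toLinearIsometry
  have hU : U (unitVec T) = unitVec S :=
    Submodule.reflection_sub_of_inner_comm (hψ.trans hχ.symm) (inner_unitVec_comm T S)
  have model := GeneralizedModel.ofIsometry hP hPsum (unitVec T) (EuclideanSpace.single 0 1) hψ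
    (by simp) U
  rw [hU, norm_inner_single_unitVec_sq hT0, norm_inner_single_unitVec_sq hS0.le] at model
  exact ⟨model⟩
end
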